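/- Let (Y, m) be jointly distributed with m ranging over a finite set of segmentations, and suppose the factorability assumption P(Y, m) = C ∏_{r ∈ m} a_r P(Y^r) holds with uniform-conditional-on-dimension prior P(m|K) = C(n-1,K-1)^{-1} (so a_r = 1). Then P(Y, K) = ∑_{m ∈ M_K} P(Y,m) · P(K) / C(n-1,K-1) equals P(K) · C(n-1,K-1)^{-1} · (A^K)_{1,n+1}, where A is the (n+1)×(n+1) matrix with A_{ij} = P(Y^{[i,j)}) for i < j and 0 otherwise. -/
import Mathlib


/-- Segmentations of `[a, b)` into `k` contiguous segments, as strictly increasing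
sequences `a = t 0 < ... < t k = b` with values in `{0, ..., n+1}`. -/
def Seg (n k a b : ℕ) : Finset (Fin (k + 1) → Fin (n + 2)) :=
  Finset.univ.filter fun t =>
    (∀ l : Fin k, t l.castSucc < t l.succ) ∧ (t 0 : ℕ) = a ∧ (t (Fin.last k) : ℕ) = b

/-- Multiplicative weight of a segmentation: product of `PY` over its segments. -/
def W (n k : ℕ) (PY : ℕ → ℕ → ℝ) (t : Fin (k + 1) → Fin (n + 2)) : ℝ :=
  ∏ l : Fin k, PY (t l.castSucc) (t l.succ)

lemma pow_entry {m : ℕ} (A : Matrix (Fin m) (Fin m) ℝ) :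
    ∀ (k : ℕ) (i j : Fin m),
      (A ^ k) i j = ∑ t : Fin (k + 1) → Fin m,
        (if t 0 = i ∧ t (Fin.last k) = j then
          ∏ l : Fin k, A (t l.castSucc) (t l.succ) else 0) := by
  intro k
  induction k with
  | zero =>
    intro i j
    rw [Fintype.sum_equiv (Equiv.funUnique (Fin 1) (Fin m))
      (fun t : Fin 1 → Fin m => if t 0 = i ∧ t (Fin.last 0) = j then
        ∏ l : Fin 0, A (t l.castSucc) (t l.succ) else 0)
      (fun x => if x = i ∧ x = j then 1 else 0)
      (fun t => by simp [Equiv.funUnique, Fin.last, show (default : Fin 1) = 0 from rfl])]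
    simp [Matrix.one_apply, ite_and, Finset.sum_ite_eq]
  | succ k ih =>
    intro i j
    rw [pow_succ', Matrix.mul_apply]
    have hr : ∑ t : Fin (k + 2) → Fin m,
        (if t 0 = i ∧ t (Fin.last (k + 1)) = j then
          ∏ l : Fin (k + 1), A (t l.castSucc) (t l.succ) else 0)
        = ∑ p : Fin m × (Fin (k + 1) → Fin m),
            (if p.1 = i ∧ p.2 (Fin.last k) = j then
              A p.1 (p.2 0) * ∏ l : Fin k, A (p.2 l.castSucc) (p.2 l.succ) else 0) := by
      rw [← Fintype.sum_equiv (Fin.consEquiv (fun _ => Fin m))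
        (fun p => if (Fin.consEquiv (fun _ => Fin m)) p 0 = i ∧
            (Fin.consEquiv (fun _ => Fin m)) p (Fin.last (k + 1)) = j then
          ∏ l : Fin (k + 1), A ((Fin.consEquiv (fun _ => Fin m)) p l.castSucc)
            ((Fin.consEquiv (fun _ => Fin m)) p l.succ) else 0)
        _ (fun p => rfl)]
      refine Finset.sum_congr rfl fun p _ => ?_
      simp [Fin.consEquiv_apply, ← Fin.succ_last, Fin.prod_univ_succ, ← Fin.succ_castSucc]
    rw [hr, Fintype.sum_prod_type]
    have hswap : ∀ x : Fin m, A i x * ∑ t : Fin (k + 1) → Fin m,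
        (if t 0 = x ∧ t (Fin.last k) = j then
          ∏ l : Fin k, A (t l.castSucc) (t l.succ) else 0)
        = ∑ t : Fin (k + 1) → Fin m,
          (if t 0 = x ∧ t (Fin.last k) = j then
            A i x * ∏ l : Fin k, A (t l.castSucc) (t l.succ) else 0) := by
      intro x
      rw [Finset.mul_sum]
      exact Finset.sum_congr rfl fun t _ => by split <;> simp
    calc ∑ x, A i x * (A ^ k) x j
        = ∑ x, ∑ t : Fin (k + 1) → Fin m,
            (if t 0 = x ∧ t (Fin.last k) = j then
              A i x * ∏ l : Fin k, A (t l.castSucc) (t l.succ) else 0) := by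
          refine Finset.sum_congr rfl fun x _ => ?_
          rw [ih x j, hswap]
      _ = ∑ t : Fin (k + 1) → Fin m, ∑ x,
            (if t 0 = x ∧ t (Fin.last k) = j then
              A i x * ∏ l : Fin k, A (t l.castSucc) (t l.succ) else 0) := Finset.sum_comm
      _ = ∑ t : Fin (k + 1) → Fin m,
            (if t (Fin.last k) = j then
              A i (t 0) * ∏ l : Fin k, A (t l.castSucc) (t l.succ) else 0) := by
          refine Finset.sum_congr rfl fun t _ => ?_
          simp [ite_and, Finset.sum_ite_eq]
      _ = ∑ x, ∑ t : Fin (k + 1) → Fin m,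
            (if x = i ∧ t (Fin.last k) = j then
              A x (t 0) * ∏ l : Fin k, A (t l.castSucc) (t l.succ) else 0) := by
          rw [Finset.sum_comm]
          refine Finset.sum_congr rfl fun t _ => ?_
          simp [ite_and, Finset.sum_ite_eq']

/-- Under the factorability assumption with the uniform prior
conditional on the dimension, P(Y,K) = ∑_{m ∈ M_K} (∏_r P(Y^r))·P(K)/C(n-1,K-1)
equals P(K)·C(n-1,K-1)⁻¹·(A^K)_{1,n+1}, where A_{ij} = P(Y^{[i,j)}) for i < j
and 0 otherwise (indices i,j representing positions 1,...,n+1). -/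
theorem joint_data_dimension_matrix_power (n K : ℕ) (hK : 1 ≤ K) (hKn : K ≤ n)
    (PY : ℕ → ℕ → ℝ) (hPY : ∀ a b, 0 < PY a b) (PK : ℝ)
    (A : Matrix (Fin (n + 1)) (Fin (n + 1)) ℝ)
    (hA : ∀ i j, A i j = if i < j then PY ((i : ℕ) + 1) ((j : ℕ) + 1) else 0) :
    (∑ m ∈ Seg n K 1 (n + 1), W n K PY m) * PK / ((n - 1).choose (K - 1) : ℝ)
      = PK * (((n - 1).choose (K - 1) : ℝ))⁻¹ * (A ^ K) 0 (Fin.last n) := by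
  have hmain : (∑ t : Fin (K + 1) → Fin (n + 1),
      (if t 0 = 0 ∧ t (Fin.last K) = Fin.last n then
        ∏ l : Fin K, A (t l.castSucc) (t l.succ) else 0))
      = ∑ m ∈ Seg n K 1 (n + 1), W n K PY m := by
    rw [← Finset.sum_filter]
    rw [← Finset.sum_filter_of_ne (p := fun t : Fin (K + 1) → Fin (n + 1) =>
      ∀ l : Fin K, t l.castSucc < t l.succ)
      (by
        intro t ht hne
        by_contra hcon
        push_neg at hcon
        obtain ⟨l, hl⟩ := hcon
        exact hne (Finset.prod_eq_zero (Finset.mem_univ l)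
          (by rw [hA]; exact if_neg (not_lt.mpr hl))))]
    rw [Finset.filter_filter]
    refine Finset.sum_nbij' (i := fun s l => Fin.succ (s l))
      (j := fun t l => (⟨(t l : ℕ) - 1, by omega⟩ : Fin (n + 1))) ?_ ?_ ?_ ?_ ?_
    · intro s hs
      simp only [Finset.mem_filter, Finset.mem_univ, true_and] at hs ⊢
      unfold Seg
      simp only [Finset.mem_filter, Finset.mem_univ, true_and]
      obtain ⟨⟨h0, hlast⟩, hstrict⟩ := hs
      refine ⟨fun l => by exact_mod_cast Fin.succ_lt_succ_iff.mpr (hstrict l), ?_, ?_⟩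
      · rw [Fin.val_succ, h0]; rfl
      · rw [Fin.val_succ, hlast]; simp
    · intro t ht
      unfold Seg at ht
      simp only [Finset.mem_filter, Finset.mem_univ, true_and] at ht ⊢
      obtain ⟨hstrict, h0, hlast⟩ := ht
      have hmono : StrictMono t := Fin.strictMono_iff_lt_succ.mpr hstrict
      have hge : ∀ l, 1 ≤ (t l : ℕ) := by
        intro l
        have := hmono.monotone (Fin.zero_le l)
        have h2 : (t 0 : ℕ) ≤ (t l : ℕ) := this
        omega
      refine ⟨⟨?_, ?_⟩, ?_⟩
      · apply Fin.ext; simp [h0]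
      · apply Fin.ext; simp [hlast]
      · intro l
        have := hstrict l
        have h2 : (t l.castSucc : ℕ) < (t l.succ : ℕ) := this
        have h3 := hge l.castSucc
        simp only [Fin.lt_def]
        omega
    · intro s hs
      funext l
      apply Fin.ext
      simp
    · intro t ht
      unfold Seg at ht
      simp only [Finset.mem_filter, Finset.mem_univ, true_and] at ht
      obtain ⟨hstrict, h0, hlast⟩ := ht
      have hmono : StrictMono t := Fin.strictMono_iff_lt_succ.mpr hstrict
      have hge : ∀ l, 1 ≤ (t l : ℕ) := by
        intro l
        have := hmono.monotone (Fin.zero_le l)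
        have h2 : (t 0 : ℕ) ≤ (t l : ℕ) := this
        omega
      funext l
      apply Fin.ext
      simp [Fin.val_succ]
      have := hge l
      omega
    · intro s hs
      simp only [Finset.mem_filter, Finset.mem_univ, true_and] at hs
      obtain ⟨_, hstrict⟩ := hs
      unfold W
      refine Finset.prod_congr rfl fun l _ => ?_
      rw [hA, if_pos (hstrict l)]
      simp [Fin.val_succ]
  rw [pow_entry A K 0 (Fin.last n), hmain, div_eq_mul_inv]
  ring
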